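/- Let D be a definition. Every structure interpreting exactly the parameter symbols param(D) has a unique expansion interpreting in addition the defined predicates defp(D) that satisfies D as a definition. -/

import Mathlib

/-- Terms over function symbols `Func` (with arities `arF`) and variables `V`. -/
inductive Term (Func : Type) (arF : Func → ℕ) (V : Type) : Type
  | var : V → Term Func arF V
  | func : (f : Func) → (Fin (arF f) → Term Func arF V) → Term Func arF V

/-
The vocabulary `Σ` of a definition `D` consists of:
* function symbols `Func` with arities `arF` (parameters of `D`),
* parameter predicate symbols `PP` with arities `arPP` (parameters of `D`),
* defined predicate symbols `DP` with arities `arDP` (the predicates defined by `D`).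
-/
variable {Func : Type} {arF : Func → ℕ} {PP : Type} {arPP : PP → ℕ}
  {DP : Type} {arDP : DP → ℕ}

/-- A body atom of a definitional rule: an atomic formula (over a defined or a parameter
predicate), `⊤`, `⊥`, or an equality/disequality atom between terms. -/
inductive BodyAtom (Func : Type) (arF : Func → ℕ) (PP : Type) (arPP : PP → ℕ)
    (DP : Type) (arDP : DP → ℕ) (V : Type) : Type
  | defAtom : (p : DP) → (Fin (arDP p) → Term Func arF V) → BodyAtom Func arF PP arPP DP arDP V
  | parAtom : (q : PP) → (Fin (arPP q) → Term Func arF V) → BodyAtom Func arF PP arPP DP arDP V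
  | verum : BodyAtom Func arF PP arPP DP arDP V
  | falsum : BodyAtom Func arF PP arPP DP arDP V
  | eq : Term Func arF V → Term Func arF V → BodyAtom Func arF PP arPP DP arDP V
  | neq : Term Func arF V → Term Func arF V → BodyAtom Func arF PP arPP DP arDP V

/-- A definitional rule `A ← B₁, …, Bₙ`: the head `A` is an atomic formula whose
predicate is a defined predicate, the body is a list of body atoms; all variables
(natural numbers) are implicitly universally quantified in front of the rule. -/
structure Rule (Func : Type) (arF : Func → ℕ) (PP : Type) (arPP : PP → ℕ)
    (DP : Type) (arDP : DP → ℕ) : Type where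
  headPred : DP
  headArgs : Fin (arDP headPred) → Term Func arF ℕ
  body : List (BodyAtom Func arF PP arPP DP arDP ℕ)

/-- A first-order structure interpreting the whole vocabulary `Σ`. -/
structure Struc (Func : Type) (arF : Func → ℕ) (PP : Type) (arPP : PP → ℕ)
    (DP : Type) (arDP : DP → ℕ) : Type 1 where
  carrier : Type
  nonempty : Nonempty carrier
  interpF : (f : Func) → (Fin (arF f) → carrier) → carrier
  interpPP : (q : PP) → (Fin (arPP q) → carrier) → Prop
  interpDP : (p : DP) → (Fin (arDP p) → carrier) → Prop

/-- Evaluation of a term in a structure under a variable assignment. -/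
def Term.eval (M : Struc Func arF PP arPP DP arDP) {V : Type} (σ : V → M.carrier) :
    Term Func arF V → M.carrier
  | .var v => σ v
  | .func f args => M.interpF f fun i => (args i).eval M σ

/-- Truth of a body atom in a structure under an assignment. -/
def BodyAtom.holds (M : Struc Func arF PP arPP DP arDP) {V : Type} (σ : V → M.carrier) :
    BodyAtom Func arF PP arPP DP arDP V → Prop
  | .defAtom p args => M.interpDP p fun i => (args i).eval M σ
  | .parAtom q args => M.interpPP q fun i => (args i).eval M σ
  | .verum => True
  | .falsum => False
  | .eq s t => s.eval M σ = t.eval M σ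
  | .neq s t => s.eval M σ ≠ t.eval M σ

/-- A structure satisfies a rule as a first-order implication: the universal closure of
`B₁ ∧ ⋯ ∧ Bₙ → A`. -/
def Rule.holds (M : Struc Func arF PP arPP DP arDP)
    (r : Rule Func arF PP arPP DP arDP) : Prop :=
  ∀ σ : ℕ → M.carrier, (∀ b ∈ r.body, b.holds M σ) →
    M.interpDP r.headPred fun i => (r.headArgs i).eval M σ

/-- `M` satisfies all rules of the definition `D` as first-order implications. -/
def SatRules (M : Struc Func arF PP arPP DP arDP)
    (D : Set (Rule Func arF PP arPP DP arDP)) : Prop :=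
  ∀ r ∈ D, r.holds M

/-- `M` satisfies `D` as a definition (`M ⊨_D D`): `M` satisfies every rule of `D` as a
first-order implication, and for every structure `N` with the same universe and the same
interpretations of all parameter symbols (function symbols and parameter predicates)
that satisfies every rule of `D` as an implication, `p^M ⊆ p^N` for every defined
predicate `p`. -/
def SatDef (D : Set (Rule Func arF PP arPP DP arDP))
    (M : Struc Func arF PP arPP DP arDP) : Prop :=
  SatRules M D ∧
    ∀ IDP : (p : DP) → (Fin (arDP p) → M.carrier) → Prop,
      SatRules ⟨M.carrier, M.nonempty, M.interpF, M.interpPP, IDP⟩ D →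
        ∀ p args, M.interpDP p args → IDP p args

/-- A structure interpreting exactly the parameter symbols `param(D)`: the function
symbols and the parameter predicates. -/
structure PStruc (Func : Type) (arF : Func → ℕ) (PP : Type) (arPP : PP → ℕ) : Type 1 where
  carrier : Type
  nonempty : Nonempty carrier
  interpF : (f : Func) → (Fin (arF f) → carrier) → carrier
  interpPP : (q : PP) → (Fin (arPP q) → carrier) → Prop

/-- The expansion of a parameter structure `M₀` by an interpretation `I` of the defined
predicates: it has the same universe and agrees with `M₀` on all symbols `M₀` interprets. -/
def PStruc.expand (M₀ : PStruc Func arF PP arPP)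
    (I : (p : DP) → (Fin (arDP p) → M₀.carrier) → Prop) :
    Struc Func arF PP arPP DP arDP :=
  ⟨M₀.carrier, M₀.nonempty, M₀.interpF, M₀.interpPP, I⟩

/-
Body atoms are positive in the defined predicates, so the rules of `D` are preserved under
arbitrary intersections of interpretations of `defp(D)`. The intersection of all models of the
rules is therefore the least one, and satisfying `D` as a definition means being that least model.
-/

theorem sInf_apply_apply_iff {α : Type*} {β : α → Type*} (S : Set ((a : α) → β a → Prop))
    (a : α) (b : β a) : sInf S a b ↔ ∀ J ∈ S, J a b := by
  simp only [sInf_apply, iInf_apply, iInf_Prop_eq, Subtype.forall]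

namespace PStruc

variable (M₀ : PStruc Func arF PP arPP)

theorem eval_expand (I J : (p : DP) → (Fin (arDP p) → M₀.carrier) → Prop)
    {V : Type} (σ : V → M₀.carrier) (t : Term Func arF V) :
    t.eval (M₀.expand I) σ = t.eval (M₀.expand J) σ := by
  induction t with
  | var v => rfl
  | func f args ih => exact congrArg (M₀.interpF f) (funext ih)

theorem holds_expand_mono {I J : (p : DP) → (Fin (arDP p) → M₀.carrier) → Prop} (hIJ : I ≤ J)
    {V : Type} (σ : V → M₀.carrier) (b : BodyAtom Func arF PP arPP DP arDP V)
    (hb : b.holds (M₀.expand I) σ) : b.holds (M₀.expand J) σ := by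
  cases b <;> simp only [BodyAtom.holds, M₀.eval_expand I J] at hb ⊢
  case defAtom p args => exact hIJ p _ hb
  all_goals exact hb

theorem satRules_expand_sInf (D : Set (Rule Func arF PP arPP DP arDP))
    {S : Set ((p : DP) → (Fin (arDP p) → M₀.carrier) → Prop)}
    (hS : ∀ J ∈ S, SatRules (M₀.expand J) D) : SatRules (M₀.expand (sInf S)) D := by
  intro r hr σ hbody
  refine (sInf_apply_apply_iff S _ _).2 fun J hJ => ?_
  rw [funext fun i => M₀.eval_expand (sInf S) J σ (r.headArgs i)]
  exact hS J hJ r hr σ fun b hb => M₀.holds_expand_mono (sInf_le hJ) σ b (hbody b hb)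

theorem satDef_expand_iff (D : Set (Rule Func arF PP arPP DP arDP))
    (I : (p : DP) → (Fin (arDP p) → M₀.carrier) → Prop) :
    SatDef D (M₀.expand I) ↔ IsLeast {J | SatRules (M₀.expand J) D} I :=
  Iff.rfl

theorem isLeast_sInf_satRules (D : Set (Rule Func arF PP arPP DP arDP)) :
    IsLeast {J | SatRules (M₀.expand J) D} (sInf {J | SatRules (M₀.expand J) D}) :=
  ⟨M₀.satRules_expand_sInf D fun _ hJ => hJ, (isGLB_sInf _).1⟩

end PStruc

/-- Every structure interpreting exactly the parameter symbols `param(D)`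
has a unique expansion interpreting in addition the defined predicates `defp(D)` that
satisfies `D` as a definition. -/
theorem statement_1 (D : Set (Rule Func arF PP arPP DP arDP))
    (M₀ : PStruc Func arF PP arPP) :
    ∃! I : (p : DP) → (Fin (arDP p) → M₀.carrier) → Prop,
      SatDef D (M₀.expand I) := by
  simp only [M₀.satDef_expand_iff]
  exact ⟨_, M₀.isLeast_sInf_satRules D, fun _ hI => hI.unique (M₀.isLeast_sInf_satRules D)⟩
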